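/- Let λ > 0 be a real number with λ ≠ 1. Then for every integer w ≥ 1 and every integer n ≥ 0, the partition function of loops satisfies Z_{n,w}(1+λ², 1+λ^{−2}) = ((1−λ²)/(2λ²)) · (λ^{2w}/(1−λ^{2w})) · (λ+λ^{−1})ⁿ · (1+(−1)ⁿ) + (2ⁿ/(λw)) · Σ_{k=1}^{w−1} [ ((λ+λ^{−1})/2) · sin²(kπ/w) / ( ((λ−λ^{−1})/2)² + sin²(kπ/w) ) ] · cosⁿ(kπ/w). -/

import Mathlib

def IsLoop {n w : ℕ} (h : Fin (n + 1) → Fin (w + 1)) : Prop :=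
  h 0 = 0 ∧ h (Fin.last n) = 0 ∧
    ∀ i : Fin n, |((h i.succ : ℤ) - (h i.castSucc : ℤ))| = 1

instance {n w : ℕ} (h : Fin (n + 1) → Fin (w + 1)) : Decidable (IsLoop h) := by
  unfold IsLoop; infer_instance

noncomputable def Z (n w : ℕ) (a b : ℝ) : ℝ :=
  ∑ h : Fin (n + 1) → Fin (w + 1),
    if IsLoop h then
      a ^ (Finset.univ.filter fun i : Fin (n + 1) => i ≠ 0 ∧ (h i : ℕ) = 0).card *
      b ^ (Finset.univ.filter fun i : Fin (n + 1) => (h i : ℕ) = w).card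
    else 0

/-!
The partition function is the `(0, 0)` entry of the `n`-th power of the transfer matrix
`T = A D`, where `A` is the adjacency matrix of the path `0 — 1 — ⋯ — w` and `D` is the diagonal
matrix of wall weights `a, 1, …, 1, b`. For `f : {0, …, w} → ℝ` with `D (A f) = μ f`, `f` is a
left and `D⁻¹ f` a right eigenvector of `T`, so distinct eigenvalues give a biorthogonal
eigenbasis and `(Tⁿ)₀₀ = Σₖ fₖ(0)² μₖⁿ / (a ⟨fₖ, D⁻¹ fₖ⟩)`. On the curve `ab = a + b` with
`a = 1 + λ²` all `w + 1` eigenvectors are explicit: the two bound states `(±λ⁻¹)ʲ` with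
eigenvalues `±(λ + λ⁻¹)` and `w - 1` standing waves with eigenvalues `2 cos (kπ/w)`; the identity
`a⁻¹ + b⁻¹ = 1` makes their norms come out in closed form.
-/

open Finset Matrix SimpleGraph Real

instance (n : ℕ) : DecidableRel (pathGraph n).Adj := fun _ _ => decidable_of_iff' _ pathGraph_adj

theorem Matrix.pow_apply_eq_sum_paths {α R : Type*} [Fintype α] [DecidableEq α] [CommSemiring R]
    (M : Matrix α α R) (n : ℕ) (i j : α) :
    (M ^ n) i j = ∑ h : Fin (n + 1) → α,
      if h 0 = i ∧ h (Fin.last n) = j then ∏ t : Fin n, M (h t.castSucc) (h t.succ) else 0 := by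
  induction n generalizing i with
  | zero =>
    rw [pow_zero, ← (Equiv.funUnique (Fin 1) α).symm.sum_comp,
      Fintype.sum_eq_single i fun x hx => by simp [hx]]
    simp [one_apply]
  | succ n ih =>
    rw [pow_succ', mul_apply, ← (Fin.consEquiv fun _ => α).sum_comp, Fintype.sum_prod_type,
      sum_comm (s := univ) (t := univ)]
    simp_rw [ih, mul_sum]
    rw [sum_comm]
    refine sum_congr rfl fun g _ => ?_
    have hlast (x : α) :
        (Fin.cons x g : Fin (n + 2) → α) (Fin.last (n + 1)) = g (Fin.last n) := by
      rw [← Fin.succ_last, Fin.cons_succ]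
    simp only [Fin.consEquiv_apply, Fin.cons_zero, hlast, Fin.prod_univ_succ, Fin.castSucc_zero,
      Fin.cons_succ, ← Fin.succ_castSucc]
    by_cases hg : g (Fin.last n) = j <;> simp [hg]

section Spectral

variable {K ι κ : Type*} [Field K] [Fintype ι] [Fintype κ]

theorem Matrix.dotProduct_eq_zero_of_eigenvalues_ne {M : Matrix ι ι K} {u v : ι → K} {a b : K}
    (hu : u ᵥ* M = a • u) (hv : M *ᵥ v = b • v) (hab : a ≠ b) : u ⬝ᵥ v = 0 := by
  have h : a * (u ⬝ᵥ v) = b * (u ⬝ᵥ v) := by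
    rw [← smul_eq_mul, ← smul_dotProduct, ← hu, ← dotProduct_mulVec, hv, dotProduct_smul,
      smul_eq_mul]
  by_contra hne
  exact hab (mul_right_cancel₀ hne h)

theorem Matrix.pow_mulVec_of_mulVec_eq_smul [DecidableEq ι] {M : Matrix ι ι K} {v : ι → K}
    {a : K} (hv : M *ᵥ v = a • v) (n : ℕ) : M ^ n *ᵥ v = a ^ n • v := by
  induction n with
  | zero => simp
  | succ n ih => rw [pow_succ', ← mulVec_mulVec, ih, mulVec_smul, hv, smul_smul, pow_succ]

variable [DecidableEq ι] (M : Matrix ι ι K) (μ : κ → K) (u v : κ → ι → K)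

theorem Matrix.pow_mulVec_eq_sum_of_eigenvectors (hμ : Function.Injective μ)
    (hu : ∀ k, u k ᵥ* M = μ k • u k) (hv : ∀ k, M *ᵥ v k = μ k • v k)
    (huv : ∀ k, u k ⬝ᵥ v k ≠ 0) (hcard : Fintype.card κ = Fintype.card ι) (n : ℕ)
    (x : ι → K) :
    M ^ n *ᵥ x = ∑ k, ((u k ⬝ᵥ x) / (u k ⬝ᵥ v k) * μ k ^ n) • v k := by
  have horth (k l : κ) (hkl : k ≠ l) : u k ⬝ᵥ v l = 0 :=
    dotProduct_eq_zero_of_eigenvalues_ne (hu k) (hv l) (hμ.ne hkl)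
  have hpair (k : κ) (c : κ → K) : u k ⬝ᵥ ∑ l, c l • v l = c k * (u k ⬝ᵥ v k) := by
    rw [dotProduct_sum, Fintype.sum_eq_single k fun l hl => by
      rw [dotProduct_smul, horth k l (Ne.symm hl), smul_zero], dotProduct_smul, smul_eq_mul]
  have hind : LinearIndependent K v := by
    refine Fintype.linearIndependent_iff.2 fun c hc k => ?_
    have := hpair k c
    rw [hc, dotProduct_zero] at this
    exact (mul_eq_zero.1 this.symm).resolve_right (huv k)
  obtain ⟨c, rfl⟩ : ∃ c : κ → K, ∑ l, c l • v l = x := by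
    have hx : x ∈ Submodule.span K (Set.range v) := by
      rw [hind.span_eq_top_of_card_eq_finrank' (by simpa using hcard)]; trivial
    exact (Submodule.mem_span_range_iff_exists_fun K).1 hx
  simp only [mulVec_sum, mulVec_smul, pow_mulVec_of_mulVec_eq_smul (hv _), smul_smul, hpair,
    mul_div_cancel_right₀ _ (huv _)]

end Spectral

def wallWeight (a b : ℝ) (w j : ℕ) : ℝ :=
  (if j = 0 then a else 1) * (if j = w then b else 1)

def transferMatrix (a b : ℝ) (w : ℕ) : Matrix (Fin (w + 1)) (Fin (w + 1)) ℝ :=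
  (pathGraph (w + 1)).adjMatrix ℝ * diagonal fun j : Fin (w + 1) => wallWeight a b w j

theorem isLoop_iff {n w : ℕ} (h : Fin (n + 1) → Fin (w + 1)) :
    IsLoop h ↔ (h 0 = 0 ∧ h (Fin.last n) = 0) ∧
      ∀ t : Fin n, (pathGraph (w + 1)).Adj (h t.castSucc) (h t.succ) := by
  simp only [IsLoop, pathGraph_adj, abs_eq zero_le_one, and_assoc]
  exact Iff.rfl.and (Iff.rfl.and (forall_congr' fun t => by omega))

theorem pow_card_filter_eq_prod {ι M : Type*} [Fintype ι] [CommMonoid M] (p : ι → Prop)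
    [DecidablePred p] (a : M) :
    a ^ #{i | p i} = ∏ i, if p i then a else 1 := by
  simp [prod_ite]

theorem prod_wallWeight_eq {n w : ℕ} (hw : 0 < w) (a b : ℝ) (h : Fin (n + 1) → Fin (w + 1))
    (h0 : h 0 = 0) :
    ∏ t : Fin n, wallWeight a b w (h t.succ) =
      a ^ #{i | i ≠ 0 ∧ (h i : ℕ) = 0} * b ^ #{i | (h i : ℕ) = w} := by
  have hw0 : (h 0 : ℕ) ≠ w := by simp [h0]; omega
  simp only [pow_card_filter_eq_prod, Fin.prod_univ_succ (n := n), wallWeight, prod_mul_distrib]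
  simp [hw0, Fin.succ_ne_zero]

theorem Z_eq_transferMatrix_pow_apply (n : ℕ) {w : ℕ} (hw : 0 < w) (a b : ℝ) :
    Z n w a b = (transferMatrix a b w ^ n) 0 0 := by
  rw [pow_apply_eq_sum_paths, Z]
  refine sum_congr rfl fun h _ => ?_
  simp only [transferMatrix, mul_diagonal, prod_mul_distrib, adjMatrix_apply, Fintype.prod_boole]
  by_cases hends : h 0 = 0 ∧ h (Fin.last n) = 0
  · by_cases hadj : ∀ t : Fin n, (pathGraph (w + 1)).Adj (h t.castSucc) (h t.succ)
    · rw [if_pos ((isLoop_iff h).2 ⟨hends, hadj⟩), if_pos hends, if_pos hadj, one_mul,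
        prod_wallWeight_eq hw a b h hends.1]
    · rw [if_neg fun hl => hadj ((isLoop_iff h).1 hl).2, if_pos hends, if_neg hadj, zero_mul]
  · rw [if_neg fun hl => hends ((isLoop_iff h).1 hl).1, if_neg hends]

theorem adjMatrix_pathGraph_mulVec_apply {w : ℕ} (f : ℕ → ℝ) (j : Fin (w + 1)) :
    ((pathGraph (w + 1)).adjMatrix ℝ *ᵥ fun i => f i) j =
      (if (j : ℕ) = 0 then 0 else f (j - 1)) + (if (j : ℕ) = w then 0 else f (j + 1)) := by
  have hsplit (i : ℕ) : (if (j : ℕ) + 1 = i ∨ i + 1 = j then f i else 0) =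
      (if (j : ℕ) + 1 = i then f i else 0) + (if (j : ℕ) = i + 1 then f i else 0) := by
    split_ifs <;> first | omega | simp
  simp only [mulVec, dotProduct, adjMatrix_apply, pathGraph_adj, ite_mul, one_mul, zero_mul]
  rw [Fin.sum_univ_eq_sum_range (fun i => if (j : ℕ) + 1 = i ∨ i + 1 = j then f i else 0),
    sum_congr rfl fun i _ => hsplit i, sum_add_distrib, sum_ite_eq, add_comm]
  have hj := j.isLt
  congr 1
  · cases hj' : (j : ℕ) with
    | zero => simp
    | succ m => simp; omega
  · simp only [mem_range]; split_ifs <;> first | rfl | omega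

theorem wallWeight_pos {a b : ℝ} (ha : 0 < a) (hb : 0 < b) (w j : ℕ) :
    0 < wallWeight a b w j := by
  unfold wallWeight; split_ifs <;> positivity

structure IsTransferEigenfunction (a b : ℝ) (w : ℕ) (μ : ℝ) (f : ℕ → ℝ) : Prop where
  recurrence : ∀ j, f j + f (j + 2) = μ * f (j + 1)
  left_wall : a * f 1 = μ * f 0
  right_wall : b * f (w - 1) = μ * f w

namespace IsTransferEigenfunction

variable {a b μ : ℝ} {w : ℕ} {f : ℕ → ℝ}

theorem wallWeight_mul_mulVec (hf : IsTransferEigenfunction a b w μ f) (hw : 0 < w)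
    (j : Fin (w + 1)) :
    wallWeight a b w j * ((pathGraph (w + 1)).adjMatrix ℝ *ᵥ fun i => f i) j = μ * f j := by
  rw [adjMatrix_pathGraph_mulVec_apply, wallWeight]
  by_cases h0 : (j : ℕ) = 0
  · simp [h0, hw.ne, hf.left_wall]
  by_cases hj : (j : ℕ) = w
  · simp [hj, hw.ne', hf.right_wall]
  obtain ⟨m, hm⟩ := Nat.exists_eq_add_one.2 (Nat.pos_of_ne_zero h0)
  rw [if_neg h0, if_neg hj, if_neg h0, if_neg hj, hm]
  simpa [add_assoc] using hf.recurrence m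

theorem vecMul_transferMatrix (hf : IsTransferEigenfunction a b w μ f) (hw : 0 < w) :
    (fun j : Fin (w + 1) => f j) ᵥ* transferMatrix a b w = μ • fun j : Fin (w + 1) => f j := by
  have hA : (fun j : Fin (w + 1) => f j) ᵥ* (pathGraph (w + 1)).adjMatrix ℝ =
      (pathGraph (w + 1)).adjMatrix ℝ *ᵥ fun j => f j := by
    rw [← mulVec_transpose, transpose_adjMatrix]
  ext j
  rw [transferMatrix, ← vecMul_vecMul, vecMul_diagonal, hA, mul_comm, hf.wallWeight_mul_mulVec hw,
    Pi.smul_apply, smul_eq_mul]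

theorem transferMatrix_mulVec (hf : IsTransferEigenfunction a b w μ f) (hw : 0 < w)
    (ha : 0 < a) (hb : 0 < b) :
    transferMatrix a b w *ᵥ (fun j : Fin (w + 1) => f j / wallWeight a b w j) =
      μ • fun j : Fin (w + 1) => f j / wallWeight a b w j := by
  have hs (j : ℕ) := (wallWeight_pos ha hb w j).ne'
  have hD : (diagonal fun j : Fin (w + 1) => wallWeight a b w j) *ᵥ
      (fun j : Fin (w + 1) => f j / wallWeight a b w j) = fun j : Fin (w + 1) => f j := by
    ext j; rw [mulVec_diagonal, mul_div_cancel₀ _ (hs j)]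
  ext j
  rw [transferMatrix, ← mulVec_mulVec, hD, Pi.smul_apply, smul_eq_mul, mul_div_assoc',
    eq_div_iff (hs j), mul_comm, hf.wallWeight_mul_mulVec hw]

end IsTransferEigenfunction

noncomputable def transferNormSq (a b : ℝ) (w : ℕ) (f : ℕ → ℝ) : ℝ :=
  ∑ j ∈ range (w + 1), f j ^ 2 / wallWeight a b w j

theorem transferMatrix_pow_apply_zero_zero {a b : ℝ} (ha : 0 < a) (hb : 0 < b) {w : ℕ}
    (hw : 0 < w) (μ : ℕ → ℝ) (F : ℕ → ℕ → ℝ)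
    (hF : ∀ k ≤ w, IsTransferEigenfunction a b w (μ k) (F k)) (hμ : Set.InjOn μ (Set.Iic w))
    (hN : ∀ k ≤ w, transferNormSq a b w (F k) ≠ 0) (n : ℕ) :
    (transferMatrix a b w ^ n) 0 0 =
      ∑ k ∈ range (w + 1), F k 0 ^ 2 / (a * transferNormSq a b w (F k)) * μ k ^ n := by
  have hk (k : Fin (w + 1)) : (k : ℕ) ≤ w := Nat.lt_succ_iff.1 k.isLt
  have hpair (k : ℕ) : ((fun j : Fin (w + 1) => F k j) ⬝ᵥ
      fun j : Fin (w + 1) => F k j / wallWeight a b w j) = transferNormSq a b w (F k) := by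
    rw [dotProduct, transferNormSq,
      ← Fin.sum_univ_eq_sum_range (fun j => F k j ^ 2 / wallWeight a b w j)]
    simp only [mul_div_assoc', sq]
  have hexp := pow_mulVec_eq_sum_of_eigenvectors (transferMatrix a b w)
    (fun k : Fin (w + 1) => μ k)
    (fun k j => F k j) (fun k j => F k j / wallWeight a b w j)
    (fun k l h => Fin.ext (hμ (hk k) (hk l) h))
    (fun k => (hF k (hk k)).vecMul_transferMatrix hw)
    (fun k => (hF k (hk k)).transferMatrix_mulVec hw ha hb)
    (fun k => (hpair k).trans_ne (hN k (hk k))) (by simp) n (Pi.single 0 1)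
  have hs0 : wallWeight a b w 0 = a := by simp [wallWeight, hw.ne]
  calc (transferMatrix a b w ^ n) 0 0 = (transferMatrix a b w ^ n *ᵥ Pi.single 0 1) 0 := by
        simp
    _ = _ := by
        rw [hexp, Finset.sum_apply, ← Fin.sum_univ_eq_sum_range]
        refine sum_congr rfl fun k _ => ?_
        simp only [hpair, Pi.smul_apply, smul_eq_mul, dotProduct_single_one, Fin.val_zero, hs0]
        ring

theorem transferNormSq_eq_sum_range_add {a b : ℝ} {w : ℕ} (hw : 0 < w) (f : ℕ → ℝ) :
    transferNormSq a b w f = ∑ j ∈ range w, f j ^ 2 + f 0 ^ 2 * (a⁻¹ - 1) + f w ^ 2 / b := by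
  obtain ⟨m, rfl⟩ := Nat.exists_eq_add_one.2 hw
  have hs (j : ℕ) (hj : j < m) : wallWeight a b (m + 1) (j + 1) = 1 := by
    simp [wallWeight]; omega
  rw [transferNormSq, sum_range_succ, sum_range_succ', sum_range_succ',
    sum_congr rfl fun j hj => by rw [hs j (mem_range.1 hj), div_one]]
  simp [wallWeight]
  ring

theorem isTransferEigenfunction_pow {x : ℝ} (hx : x ≠ 0) {w : ℕ} (hw : 0 < w) :
    IsTransferEigenfunction (1 + x⁻¹ ^ 2) (1 + x ^ 2) w (x + x⁻¹) (x ^ ·) where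
  recurrence j := by field_simp; ring
  left_wall := by field_simp
  right_wall := by
    obtain ⟨m, rfl⟩ := Nat.exists_eq_add_one.2 hw
    rw [Nat.add_sub_cancel]
    field_simp; ring

theorem transferNormSq_pow {x : ℝ} (hx : x ≠ 0) {w : ℕ} (hw : 0 < w) :
    transferNormSq (1 + x⁻¹ ^ 2) (1 + x ^ 2) w (x ^ ·) =
      2 * (∑ j ∈ range w, (x ^ 2) ^ j) / (1 + x⁻¹ ^ 2) := by
  have hgeom := geom_sum_mul (x ^ 2) w
  have hsq (j : ℕ) : (x ^ j) ^ 2 = (x ^ 2) ^ j := by ring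
  have hq : x ^ 2 ≠ 0 := pow_ne_zero 2 hx
  have hq1 : 1 + x ^ 2 ≠ 0 := by positivity
  rw [transferNormSq_eq_sum_range_add hw]
  simp only [hsq, inv_pow]
  generalize x ^ 2 = q at hgeom hq hq1 ⊢
  generalize ∑ j ∈ range w, q ^ j = G at hgeom ⊢
  rw [pow_zero, one_mul, show 1 + q⁻¹ = (1 + q) / q by field_simp; ring]
  field_simp
  linear_combination -hgeom

theorem sum_range_cos_two_mul_sub_eq_zero {θ : ℝ} (hθ : sin θ ≠ 0) {w : ℕ}
    (hθw : sin (w * θ) = 0) (φ : ℝ) : ∑ j ∈ range w, cos (2 * (θ * j) - φ) = 0 := by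
  have hcos : cos (w * θ) ^ 2 = 1 := by rw [cos_sq', hθw]; ring
  have hprod (x : ℝ) : 2 * sin θ * cos x = sin (x + θ) - sin (x - θ) := by
    rw [sin_add, sin_sub]; ring
  have htel (j : ℕ) : 2 * sin θ * cos (2 * (θ * j) - φ) =
      sin (2 * (θ * ↑(j + 1)) - φ - θ) - sin (2 * (θ * j) - φ - θ) := by
    rw [hprod]; push_cast; ring_nf
  have h : 2 * sin θ * ∑ j ∈ range w, cos (2 * (θ * j) - φ) = 0 := by
    rw [mul_sum, sum_congr rfl fun j _ => htel j,
      sum_range_sub (fun j : ℕ => sin (2 * (θ * j) - φ - θ)),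
      show 2 * (θ * ↑w) - φ - θ = 2 * (w * θ) + (-φ - θ) by ring, sin_add, sin_two_mul,
      cos_two_mul, hθw, hcos]
    simp only [Nat.cast_zero, mul_zero, zero_sub]
    ring
  exact (mul_eq_zero.1 h).resolve_left (mul_ne_zero two_ne_zero hθ)

/-- `sin ((j + 1) θ) - λ² sin ((j - 1) θ)`, the standing wave that satisfies the wall condition
at `0`. -/
noncomputable def trigEigenfunction (lam θ : ℝ) (j : ℕ) : ℝ :=
  cos θ * (1 - lam ^ 2) * sin (θ * j) + sin θ * (1 + lam ^ 2) * cos (θ * j)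

theorem isTransferEigenfunction_trig {lam : ℝ} (hlam : lam ≠ 0) {θ : ℝ} {w : ℕ}
    (hw : 0 < w) (hθw : sin (w * θ) = 0) :
    IsTransferEigenfunction (1 + lam ^ 2) (1 + lam⁻¹ ^ 2) w (2 * cos θ)
      (trigEigenfunction lam θ) where
  recurrence j := by
    simp only [trigEigenfunction]
    rw [show θ * ↑(j + 2) = θ * ↑(j + 1) + θ by push_cast; ring,
      show θ * (j : ℝ) = θ * ↑(j + 1) - θ by push_cast; ring,
      sin_add, cos_add, sin_sub, cos_sub]
    ring
  left_wall := by
    simp only [trigEigenfunction, Nat.cast_one, Nat.cast_zero, mul_one, mul_zero, sin_zero,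
      cos_zero]
    ring
  right_wall := by
    obtain ⟨m, rfl⟩ := Nat.exists_eq_add_one.2 hw
    have hinv : lam⁻¹ ^ 2 * lam ^ 2 = 1 := by rw [← mul_pow, inv_mul_cancel₀ hlam, one_pow]
    simp only [trigEigenfunction, Nat.add_sub_cancel]
    rw [show θ * (m : ℝ) = θ * ↑(m + 1) - θ by push_cast; ring, sin_sub, cos_sub,
      show θ * ↑(m + 1) = ↑(m + 1) * θ by ring, hθw]
    linear_combination 2 * sin θ * cos θ * cos (↑(m + 1) * θ) * hinv

theorem transferNormSq_trig {lam : ℝ} (hlam : lam ≠ 0) {θ : ℝ} (hθ : sin θ ≠ 0) {w : ℕ}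
    (hw : 0 < w) (hθw : sin (w * θ) = 0) :
    transferNormSq (1 + lam ^ 2) (1 + lam⁻¹ ^ 2) w (trigEigenfunction lam θ) =
      w / 2 * ((1 - lam ^ 2) ^ 2 + 4 * lam ^ 2 * sin θ ^ 2) := by
  set A := cos θ * (1 - lam ^ 2)
  set B := sin θ * (1 + lam ^ 2)
  have hsq (j : ℕ) : trigEigenfunction lam θ j ^ 2 = (A ^ 2 + B ^ 2) / 2 +
      (B ^ 2 - A ^ 2) / 2 * cos (2 * (θ * j) - 0) + A * B * cos (2 * (θ * j) - π / 2) := by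
    rw [sub_zero, cos_sub_pi_div_two, cos_two_mul, sin_two_mul, trigEigenfunction]
    linear_combination A ^ 2 * sin_sq_add_cos_sq (θ * j)
  have hwall : trigEigenfunction lam θ w ^ 2 = B ^ 2 := by
    rw [trigEigenfunction, mul_comm θ, hθw, mul_zero, zero_add, mul_pow, cos_sq', hθw]; ring
  have hinv : (1 + lam ^ 2)⁻¹ + (1 + lam⁻¹ ^ 2)⁻¹ = 1 := by field_simp; ring
  rw [transferNormSq_eq_sum_range_add hw, sum_congr rfl fun j _ => hsq j, sum_add_distrib,
    sum_add_distrib, ← mul_sum, ← mul_sum, sum_range_cos_two_mul_sub_eq_zero hθ hθw,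
    sum_range_cos_two_mul_sub_eq_zero hθ hθw, hwall]
  simp only [trigEigenfunction, Nat.cast_zero, mul_zero, sin_zero, cos_zero, sum_const, card_range,
    nsmul_eq_mul]
  linear_combination B ^ 2 * hinv + ((1 - lam ^ 2) ^ 2) * w / 2 * sin_sq_add_cos_sq θ

theorem natCast_mul_pi_div_mem_Ioo {k w : ℕ} (hk : 0 < k) (hkw : k < w) :
    (k : ℝ) * π / w ∈ Set.Ioo 0 π := by
  have hw : (0 : ℝ) < w := by exact_mod_cast hk.trans hkw
  refine ⟨by positivity, (div_lt_iff₀ hw).2 ?_⟩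
  rw [mul_comm π]
  exact mul_lt_mul_of_pos_right (by exact_mod_cast hkw) pi_pos

theorem sin_natCast_mul_natCast_mul_pi_div {w : ℕ} (hw : w ≠ 0) (k : ℕ) :
    sin (w * (k * π / w)) = 0 := by
  rw [mul_div_cancel₀ _ (Nat.cast_ne_zero.2 hw)]
  exact sin_nat_mul_pi k

noncomputable def loopEigenvalue (lam : ℝ) (w k : ℕ) : ℝ :=
  if k = 0 then lam + lam⁻¹ else if k = w then -(lam + lam⁻¹) else 2 * cos (k * π / w)

noncomputable def loopEigenfunction (lam : ℝ) (w k : ℕ) : ℕ → ℝ :=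
  if k = 0 then (lam⁻¹ ^ ·) else if k = w then ((-lam⁻¹) ^ ·)
  else trigEigenfunction lam (k * π / w)

theorem isTransferEigenfunction_loopEigenfunction {lam : ℝ} (hlam : lam ≠ 0) {w : ℕ}
    (hw : 0 < w) (k : ℕ) :
    IsTransferEigenfunction (1 + lam ^ 2) (1 + lam⁻¹ ^ 2) w (loopEigenvalue lam w k)
      (loopEigenfunction lam w k) := by
  unfold loopEigenvalue loopEigenfunction
  split_ifs with h0 hkw
  · simpa [add_comm] using isTransferEigenfunction_pow (inv_ne_zero hlam) hw
  · simpa [add_comm, neg_add] using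
      isTransferEigenfunction_pow (neg_ne_zero.2 (inv_ne_zero hlam)) hw
  · exact isTransferEigenfunction_trig hlam hw (sin_natCast_mul_natCast_mul_pi_div hw.ne' k)

theorem two_lt_add_inv {x : ℝ} (hx : 0 < x) (hx1 : x ≠ 1) : 2 < x + x⁻¹ := by
  rw [← sub_pos, show x + x⁻¹ - 2 = (x - 1) ^ 2 / x by field_simp; ring]
  exact div_pos (pow_two_pos_of_ne_zero (sub_ne_zero.2 hx1)) hx

theorem strictAntiOn_loopEigenvalue {lam : ℝ} (hlam : 0 < lam) (hlam1 : lam ≠ 1) (w : ℕ) :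
    StrictAntiOn (loopEigenvalue lam w) (Set.Iic w) := by
  have hedge := two_lt_add_inv hlam hlam1
  intro k hk l hl hkl
  simp only [Set.mem_Iic] at hk hl
  unfold loopEigenvalue
  rw [if_neg (by omega : l ≠ 0), if_neg (by omega : k ≠ w)]
  rcases Nat.eq_zero_or_pos k with rfl | hk0
  · rw [if_pos rfl]
    split_ifs with hlw
    · linarith
    · have hθ := natCast_mul_pi_div_mem_Ioo hkl (lt_of_le_of_ne hl hlw)
      have := cos_lt_cos_of_nonneg_of_le_pi le_rfl hθ.2.le hθ.1
      rw [cos_zero] at this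
      linarith
  · have hθk := natCast_mul_pi_div_mem_Ioo (w := w) hk0 (by omega)
    rw [if_neg hk0.ne']
    split_ifs with hlw
    · have := cos_lt_cos_of_nonneg_of_le_pi hθk.1.le le_rfl hθk.2
      rw [cos_pi] at this
      linarith
    · have hθl := natCast_mul_pi_div_mem_Ioo (hk0.trans hkl) (lt_of_le_of_ne hl hlw)
      have hw : (0 : ℝ) < w := by exact_mod_cast hk0.trans (hkl.trans_le hl)
      have hθkl : (k : ℝ) * π / w < l * π / w := by gcongr
      linarith [cos_lt_cos_of_nonneg_of_le_pi hθk.1.le hθl.2.le hθkl]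

section LoopWeights

variable {lam : ℝ} {w k : ℕ}

theorem transferNormSq_loopEigenfunction_of_edge (hlam : lam ≠ 0) (hw : 0 < w)
    (hk : k = 0 ∨ k = w) :
    transferNormSq (1 + lam ^ 2) (1 + lam⁻¹ ^ 2) w (loopEigenfunction lam w k) =
      2 * (∑ j ∈ range w, (lam⁻¹ ^ 2) ^ j) / (1 + lam ^ 2) := by
  rcases hk with rfl | rfl
  · simpa [loopEigenfunction] using transferNormSq_pow (inv_ne_zero hlam) hw
  · simpa [loopEigenfunction, hw.ne'] using
      transferNormSq_pow (neg_ne_zero.2 (inv_ne_zero hlam)) hw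

theorem transferNormSq_loopEigenfunction_of_lt (hlam : lam ≠ 0) (hk : 0 < k) (hkw : k < w) :
    transferNormSq (1 + lam ^ 2) (1 + lam⁻¹ ^ 2) w (loopEigenfunction lam w k) =
      w / 2 * ((1 - lam ^ 2) ^ 2 + 4 * lam ^ 2 * sin (k * π / w) ^ 2) := by
  have hθ := natCast_mul_pi_div_mem_Ioo hk hkw
  rw [loopEigenfunction, if_neg hk.ne', if_neg hkw.ne]
  exact transferNormSq_trig hlam (sin_pos_of_pos_of_lt_pi hθ.1 hθ.2).ne' (hk.trans hkw)
    (sin_natCast_mul_natCast_mul_pi_div (hk.trans hkw).ne' k)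

theorem transferNormSq_loopEigenfunction_pos (hlam : 0 < lam) (hw : 0 < w) (hk : k ≤ w) :
    0 < transferNormSq (1 + lam ^ 2) (1 + lam⁻¹ ^ 2) w (loopEigenfunction lam w k) := by
  by_cases hedge : k = 0 ∨ k = w
  · rw [transferNormSq_loopEigenfunction_of_edge hlam.ne' hw hedge]
    have : 0 < ∑ j ∈ range w, (lam⁻¹ ^ 2) ^ j :=
      sum_pos (fun j _ => by positivity) (nonempty_range_iff.2 hw.ne')
    positivity
  · have hk0 : 0 < k := by omega
    have hkw : k < w := by omega
    have hθ := natCast_mul_pi_div_mem_Ioo hk0 hkw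
    have := sin_pos_of_pos_of_lt_pi hθ.1 hθ.2
    rw [transferNormSq_loopEigenfunction_of_lt hlam.ne' hk0 hkw]
    positivity

theorem loopEigenfunction_weight_of_edge (hlam : lam ≠ 0) (hw : 0 < w) (hk : k = 0 ∨ k = w) :
    loopEigenfunction lam w k 0 ^ 2 / ((1 + lam ^ 2) *
        transferNormSq (1 + lam ^ 2) (1 + lam⁻¹ ^ 2) w (loopEigenfunction lam w k)) =
      (2 * ∑ j ∈ range w, (lam⁻¹ ^ 2) ^ j)⁻¹ := by
  have hF : loopEigenfunction lam w k 0 = 1 := by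
    unfold loopEigenfunction; split_ifs <;> simp_all
  rw [transferNormSq_loopEigenfunction_of_edge hlam hw hk, hF]
  field_simp

theorem loopEigenfunction_weight_of_lt (hlam : 0 < lam) (hk : 0 < k) (hkw : k < w) :
    loopEigenfunction lam w k 0 ^ 2 / ((1 + lam ^ 2) *
        transferNormSq (1 + lam ^ 2) (1 + lam⁻¹ ^ 2) w (loopEigenfunction lam w k)) =
      (lam * w)⁻¹ * ((lam + lam⁻¹) / 2 * sin (k * π / w) ^ 2 /
        (((lam - lam⁻¹) / 2) ^ 2 + sin (k * π / w) ^ 2)) := by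
  have hθ := natCast_mul_pi_div_mem_Ioo hk hkw
  have hs := sin_pos_of_pos_of_lt_pi hθ.1 hθ.2
  have hw : (0 : ℝ) < w := by exact_mod_cast hk.trans hkw
  rw [transferNormSq_loopEigenfunction_of_lt hlam.ne' hk hkw]
  simp only [loopEigenfunction, if_neg hk.ne', if_neg hkw.ne, trigEigenfunction, Nat.cast_zero,
    mul_zero, sin_zero, cos_zero, mul_one, zero_add]
  field_simp
  ring

end LoopWeights

theorem inv_two_mul_geom_sum_inv_sq {lam : ℝ} (hlam : 0 < lam) (hlam1 : lam ≠ 1) {w : ℕ}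
    (hw : 0 < w) :
    (2 * ∑ j ∈ range w, (lam⁻¹ ^ 2) ^ j)⁻¹ =
      (1 - lam ^ 2) / (2 * lam ^ 2) * (lam ^ (2 * w) / (1 - lam ^ (2 * w))) := by
  have hp : lam ^ 2 ≠ 1 := by rwa [Ne, pow_eq_one_iff_of_nonneg hlam.le two_ne_zero]
  have hpw : (lam ^ 2) ^ w ≠ 1 := by
    rwa [Ne, pow_eq_one_iff_of_nonneg (by positivity) hw.ne']
  have hp0 : lam ^ 2 ≠ 0 := by positivity
  rw [pow_mul, inv_pow]
  generalize lam ^ 2 = p at hp hpw hp0 ⊢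
  have hgeom := geom_sum_mul p⁻¹ w
  generalize ∑ j ∈ range w, p⁻¹ ^ j = G at hgeom ⊢
  rw [inv_pow] at hgeom
  have hG : G ≠ 0 := by
    rintro rfl
    rw [zero_mul, eq_comm, sub_eq_zero, inv_eq_one] at hgeom
    exact hpw hgeom
  have hpw' : 1 - p ^ w ≠ 0 := sub_ne_zero.2 (Ne.symm hpw)
  field_simp at hgeom ⊢
  linear_combination -hgeom

theorem sum_range_succ_eq_add_add_sum_Icc {M : Type*} [AddCommMonoid M] (f : ℕ → M) {w : ℕ}
    (hw : 0 < w) : ∑ k ∈ range (w + 1), f k = f 0 + f w + ∑ k ∈ Icc 1 (w - 1), f k := by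
  obtain ⟨m, rfl⟩ := Nat.exists_eq_add_one.2 hw
  rw [sum_range_succ, sum_range_eq_add_Ico _ hw, Nat.add_sub_cancel, ← Ico_add_one_right_eq_Icc]
  abel

/-- exact expression for `Z_{n,w}(1+λ², 1+λ⁻²)` for `λ > 0`, `λ ≠ 1`. -/
theorem Z_on_curve (lam : ℝ) (hlam : 0 < lam) (hlam1 : lam ≠ 1) (w n : ℕ) (hw : 1 ≤ w) :
    Z n w (1 + lam ^ 2) (1 + lam⁻¹ ^ 2) =
      (1 - lam ^ 2) / (2 * lam ^ 2) * (lam ^ (2 * w) / (1 - lam ^ (2 * w))) *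
        (lam + lam⁻¹) ^ n * (1 + (-1 : ℝ) ^ n) +
      2 ^ n / (lam * (w : ℝ)) *
        ∑ k ∈ Finset.Icc 1 (w - 1),
          ((lam + lam⁻¹) / 2 * Real.sin ((k : ℝ) * Real.pi / (w : ℝ)) ^ 2 /
              (((lam - lam⁻¹) / 2) ^ 2 + Real.sin ((k : ℝ) * Real.pi / (w : ℝ)) ^ 2)) *
            Real.cos ((k : ℝ) * Real.pi / (w : ℝ)) ^ n := by
  replace hw : 0 < w := hw
  rw [Z_eq_transferMatrix_pow_apply n hw, transferMatrix_pow_apply_zero_zero (by positivity)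
    (by positivity) hw (loopEigenvalue lam w) (loopEigenfunction lam w)
    (fun k _ => isTransferEigenfunction_loopEigenfunction hlam.ne' hw k)
    (strictAntiOn_loopEigenvalue hlam hlam1 w).injOn
    (fun k hk => (transferNormSq_loopEigenfunction_pos hlam hw hk).ne') n,
    sum_range_succ_eq_add_add_sum_Icc _ hw, mul_sum]
  congr 1
  · rw [loopEigenfunction_weight_of_edge hlam.ne' hw (.inl rfl),
      loopEigenfunction_weight_of_edge hlam.ne' hw (.inr rfl),
      inv_two_mul_geom_sum_inv_sq hlam hlam1 hw,
      loopEigenvalue, loopEigenvalue, if_pos rfl, if_neg hw.ne', if_pos rfl, neg_pow]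
    ring
  · refine sum_congr rfl fun k hk => ?_
    obtain ⟨hk0, hkw⟩ : 0 < k ∧ k < w := by simp only [mem_Icc] at hk; omega
    rw [loopEigenfunction_weight_of_lt hlam hk0 hkw, loopEigenvalue, if_neg hk0.ne', if_neg hkw.ne,
      mul_pow]
    ring
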